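/- Fix x₀ ∈ ℝ^N. Suppose there is a > 0 with ‖L* x‖₂² ≥ a ‖x‖₂² for all x ∈ ℝ^N (so L* is the analysis operator of a frame with lower frame bound a), and let L̃ : ℝ^P → ℝ^N be a linear map with L̃ ∘ L* = Id on ℝ^N (a dual frame synthesis operator). Suppose the norm A is decomposable at L* x₀ with data (T₀, e₀); set S₀ := T₀⊥, and assume Φ is injective on the image of L̃ ∘ P_{T₀}. Then there exist constants C₁ > 0 and C₂' > 0, independent of η, α, ε, c, and w, such that for every ε > 0, c > 0, w ∈ ℝ^M with ‖w‖₂ ≤ ε, setting y := Φ x₀ + w and λ := c ε, for every pair (η, α) for which the source condition SC(x₀) holds with A*(P_{S₀} α) < 1, every minimizer x⋆ of problem (P) satisfies ‖x⋆ − x₀‖₂ ≤ [ C₁ (2 + c‖η‖₂) + C₂' (1 + c‖η‖₂/2)² / (c (1 − A*(P_{S₀} α))) ] ε. -/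

import Mathlib

open RealInnerProductSpace

noncomputable section

abbrev Euc (n : ℕ) := EuclideanSpace ℝ (Fin n)

def proj {n : ℕ} (V : Submodule ℝ (Euc n)) : Euc n →L[ℝ] Euc n :=
  V.subtypeL.comp (Submodule.orthogonalProjectionOnto V)

def dualNorm {n : ℕ} (A : Euc n → ℝ) (α : Euc n) : ℝ :=
  sSup {r : ℝ | ∃ v : Euc n, A v ≤ 1 ∧ r = ⟪α, v⟫}

def subdiff {n : ℕ} (f : Euc n → ℝ) (x : Euc n) : Set (Euc n) :=
  {g : Euc n | ∀ y : Euc n, f x + ⟪g, y - x⟫ ≤ f y}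

def IsNorm {n : ℕ} (A : Euc n → ℝ) : Prop :=
  (∀ x, A x = 0 ↔ x = 0) ∧ (∀ (c : ℝ) (x : Euc n), A (c • x) = |c| * A x) ∧
    (∀ x y, A (x + y) ≤ A x + A y)

def Decomposable {n : ℕ} (A : Euc n → ℝ) (u : Euc n) (T : Submodule ℝ (Euc n)) (e : Euc n) :
    Prop :=
  e ∈ T ∧
  subdiff A u = {α : Euc n | proj T α = e ∧ dualNorm A (proj Tᗮ α) ≤ 1} ∧
  ∀ z : Euc n, z ∈ Tᗮ →
    A z = sSup {r : ℝ | ∃ v ∈ (Tᗮ : Submodule ℝ (Euc n)), dualNorm A v ≤ 1 ∧ r = ⟪v, z⟫}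

def obj {N M P : ℕ} (Φ : Euc N →L[ℝ] Euc M) (L : Euc P →L[ℝ] Euc N) (A : Euc P → ℝ)
    (y : Euc M) (lam : ℝ) (x : Euc N) : ℝ :=
  (1/2) * ‖y - Φ x‖^2 + lam * A (ContinuousLinearMap.adjoint L x)

def SC {N M P : ℕ} (Φ : Euc N →L[ℝ] Euc M) (L : Euc P →L[ℝ] Euc N) (A : Euc P → ℝ)
    (x : Euc N) (η : Euc M) (α : Euc P) : Prop :=
  α ∈ subdiff A (ContinuousLinearMap.adjoint L x) ∧
  ContinuousLinearMap.adjoint Φ η = L α ∧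
  L α ∈ subdiff (fun z => A (ContinuousLinearMap.adjoint L z)) x

def breg {n : ℕ} (A : Euc n → ℝ) (α u u₀ : Euc n) : ℝ :=
  A u - A u₀ - ⟪α, u - u₀⟫

/-!
Compare the minimizer `x⋆` with `x₀` in the objective. The source condition turns the linear
term into `⟪α, L* (x⋆ - x₀)⟫ = ⟪η, Φ (x⋆ - x₀)⟫`, so one quadratic inequality bounds the
residual `‖Φ (x⋆ - x₀)‖` by `O(ε)` and the Bregman distance `D` of `A` at `L* x₀` by
`O(ε / c)`. Decomposability gives `(1 - A* (P_{S₀} α)) A (P_{S₀} L* (x⋆ - x₀)) ≤ D`.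
Finally `x⋆ - x₀ = L̃ P_{T₀} L* (x⋆ - x₀) + L̃ P_{S₀} L* (x⋆ - x₀)`: the first summand lies in
the space on which `Φ` is injective, hence is controlled by its image under `Φ`; the second is
controlled by `A (P_{S₀} L* (x⋆ - x₀))` because all norms on `ℝ^P` are equivalent.
-/

open ContinuousLinearMap

namespace IsNorm

variable {n : ℕ} {A : Euc n → ℝ}

lemma map_zero (hA : IsNorm A) : A 0 = 0 := (hA.1 0).mpr rfl

lemma map_neg (hA : IsNorm A) (x : Euc n) : A (-x) = A x := by
  simpa using hA.2.1 (-1) x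

lemma nonneg (hA : IsNorm A) (x : Euc n) : 0 ≤ A x := by
  have := hA.2.2 x (-x)
  rw [add_neg_cancel, hA.map_zero, hA.map_neg] at this
  linarith

lemma pos (hA : IsNorm A) {x : Euc n} (hx : x ≠ 0) : 0 < A x :=
  (hA.nonneg x).lt_of_ne' (mt (hA.1 x).mp hx)

lemma convexOn (hA : IsNorm A) : ConvexOn ℝ Set.univ A := by
  refine ⟨convex_univ, fun x _ y _ a b ha hb _ => ?_⟩
  calc A (a • x + b • y) ≤ A (a • x) + A (b • y) := hA.2.2 _ _
    _ = a • A x + b • A y := by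
      rw [hA.2.1, hA.2.1, abs_of_nonneg ha, abs_of_nonneg hb, smul_eq_mul, smul_eq_mul]

lemma continuous (hA : IsNorm A) : Continuous A :=
  hA.convexOn.locallyLipschitz.continuous

lemma exists_norm_le_mul (hA : IsNorm A) : ∃ C > 0, ∀ x, ‖x‖ ≤ C * A x := by
  by_cases hS : (Metric.sphere (0 : Euc n) 1).Nonempty
  · obtain ⟨v, hv, hmin⟩ :=
      (isCompact_sphere (0 : Euc n) 1).exists_isMinOn hS hA.continuous.continuousOn
    have hAv := hA.pos (ne_zero_of_mem_unit_sphere ⟨v, hv⟩)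
    refine ⟨(A v)⁻¹, inv_pos.mpr hAv, fun x => ?_⟩
    rcases eq_or_ne x 0 with rfl | hx
    · simp [hA.map_zero]
    have hxn := norm_pos_iff.mpr hx
    have h : A v ≤ A (‖x‖⁻¹ • x) := hmin (mem_sphere_zero_iff_norm.mpr (norm_smul_inv_norm hx))
    rw [hA.2.1, abs_of_pos (inv_pos.mpr hxn), le_inv_mul_iff₀ hxn] at h
    rw [le_inv_mul_iff₀ hAv, mul_comm]
    exact h
  · refine ⟨1, one_pos, fun x => ?_⟩
    obtain rfl : x = 0 := by
      by_contra hx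
      exact hS ⟨‖x‖⁻¹ • x, mem_sphere_zero_iff_norm.mpr (norm_smul_inv_norm hx)⟩
    simp [hA.map_zero]

end IsNorm

section DualNorm

variable {n : ℕ} {A : Euc n → ℝ}

lemma IsNorm.bddAbove_inner (hA : IsNorm A) (β : Euc n) :
    BddAbove {r : ℝ | ∃ v : Euc n, A v ≤ 1 ∧ r = ⟪β, v⟫} := by
  obtain ⟨C, hC, hCA⟩ := hA.exists_norm_le_mul
  refine ⟨‖β‖ * C, ?_⟩
  rintro _ ⟨v, hv, rfl⟩
  calc ⟪β, v⟫ ≤ ‖β‖ * ‖v‖ := real_inner_le_norm _ _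
    _ ≤ ‖β‖ * C := by
      gcongr
      exact (hCA v).trans (mul_le_of_le_one_right hC.le hv)

lemma IsNorm.dualNorm_zero (hA : IsNorm A) : dualNorm A 0 = 0 := by
  have h : {r : ℝ | ∃ v : Euc n, A v ≤ 1 ∧ r = ⟪(0 : Euc n), v⟫} = {0} := by
    ext r
    simp only [inner_zero_left, Set.mem_ofPred_eq, Set.mem_singleton_iff]
    exact ⟨fun ⟨_, _, hr⟩ => hr, fun hr => ⟨0, by simp [hA.map_zero], hr⟩⟩
  rw [dualNorm, h, csSup_singleton]

lemma IsNorm.inner_le_dualNorm_mul (hA : IsNorm A) (β z : Euc n) :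
    ⟪β, z⟫ ≤ dualNorm A β * A z := by
  rcases eq_or_ne z 0 with rfl | hz
  · simp [hA.map_zero]
  have hAz := hA.pos hz
  have hunit : A ((A z)⁻¹ • z) = 1 := by
    rw [hA.2.1, abs_of_pos (inv_pos.mpr hAz), inv_mul_cancel₀ hAz.ne']
  have h : ⟪β, (A z)⁻¹ • z⟫ ≤ dualNorm A β :=
    le_csSup (hA.bddAbove_inner β) ⟨_, hunit.le, rfl⟩
  rwa [real_inner_smul_right, inv_mul_le_iff₀ hAz, mul_comm] at h

end DualNorm

section Projection

variable {n : ℕ} (V : Submodule ℝ (Euc n))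

lemma proj_eq_starProjection : proj V = V.starProjection := rfl

lemma proj_mem (x : Euc n) : proj V x ∈ V := V.starProjection_apply_mem x

lemma proj_add_proj_orthogonal (x : Euc n) : proj V x + proj Vᗮ x = x :=
  V.starProjection_add_starProjection_orthogonal x

variable {V}

lemma proj_eq_self {x : Euc n} (hx : x ∈ V) : proj V x = x :=
  Submodule.starProjection_eq_self_iff.mpr hx

lemma proj_eq_zero {x : Euc n} (hx : x ∈ Vᗮ) : proj V x = 0 :=
  (V.starProjection_apply_eq_zero_iff).mpr hx

lemma inner_proj_right_of_mem {v : Euc n} (hv : v ∈ V) (x : Euc n) :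
    ⟪v, proj V x⟫ = ⟪v, x⟫ := by
  rw [proj_eq_starProjection, ← Submodule.inner_starProjection_left_eq_right,
    Submodule.starProjection_eq_self_iff.mpr hv]

end Projection

lemma breg_nonneg {n : ℕ} {A : Euc n → ℝ} {α u₀ : Euc n} (hα : α ∈ subdiff A u₀)
    (u : Euc n) : 0 ≤ breg A α u u₀ := by
  have := hα u
  unfold breg
  linarith

/-- Every `e + v` with `v ∈ Tᗮ`, `A* v ≤ 1` is a subgradient at `u₀`, so comparing it with `α`
and taking the supremum over `v` recovers `A (P_{Tᗮ} (u - u₀))` on the left. -/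
lemma Decomposable.sub_dualNorm_mul_le_breg {n : ℕ} {A : Euc n → ℝ} (hA : IsNorm A)
    {u₀ : Euc n} {T : Submodule ℝ (Euc n)} {e : Euc n} (hdec : Decomposable A u₀ T e)
    {α : Euc n} (hα : α ∈ subdiff A u₀) (u : Euc n) :
    (1 - dualNorm A (proj Tᗮ α)) * A (proj Tᗮ (u - u₀)) ≤ breg A α u u₀ := by
  obtain ⟨he, hsubdiff, hsup⟩ := hdec
  have hαe : proj T α = e := (hsubdiff ▸ hα).1
  have hα_split : ⟪α, u - u₀⟫ = ⟪e, u - u₀⟫ + ⟪proj Tᗮ α, proj Tᗮ (u - u₀)⟫ := by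
    rw [inner_proj_right_of_mem (proj_mem _ _), ← inner_add_left, ← hαe,
      proj_add_proj_orthogonal]
  have h₂ := hA.inner_le_dualNorm_mul (proj Tᗮ α) (proj Tᗮ (u - u₀))
  suffices A (proj Tᗮ (u - u₀)) ≤
      breg A α u u₀ + dualNorm A (proj Tᗮ α) * A (proj Tᗮ (u - u₀)) by linarith
  refine (hsup _ (proj_mem _ _)).le.trans <|
    csSup_le ⟨0, 0, Tᗮ.zero_mem, by simp [hA.dualNorm_zero], by simp⟩ ?_
  rintro _ ⟨v, hv, hvA, rfl⟩
  have hev : e + v ∈ subdiff A u₀ := by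
    rw [hsubdiff]
    refine ⟨?_, ?_⟩
    · rw [map_add, proj_eq_self he, proj_eq_zero hv, add_zero]
    · rwa [map_add, proj_eq_zero (T.le_orthogonal_orthogonal he), proj_eq_self hv, zero_add]
  have h₁ := hev u
  rw [inner_add_left, ← inner_proj_right_of_mem hv] at h₁
  unfold breg
  linarith

lemma exists_norm_le_mul_norm_of_injOn {E F : Type*} [NormedAddCommGroup E] [NormedSpace ℝ E]
    [FiniteDimensional ℝ E] [NormedAddCommGroup F] [NormedSpace ℝ F] (f : E →ₗ[ℝ] F)
    (V : Submodule ℝ E) (hf : ∀ v ∈ V, f v = 0 → v = 0) :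
    ∃ C > 0, ∀ v ∈ V, ‖v‖ ≤ C * ‖f v‖ := by
  have hker : LinearMap.ker (f ∘ₗ V.subtype) = ⊥ :=
    LinearMap.ker_eq_bot'.mpr fun v hv => Subtype.ext (hf v v.2 hv)
  obtain ⟨K, hK, hanti⟩ := (f ∘ₗ V.subtype).exists_antilipschitzWith hker
  refine ⟨K, hK, fun v hv => ?_⟩
  simpa using hanti.le_mul_dist ⟨v, hv⟩ 0

lemma exists_norm_le_mul_norm_map_add_mul_norm_proj {N M P : ℕ} (Φ : Euc N →L[ℝ] Euc M)
    (S : Euc N →L[ℝ] Euc P) (Lt : Euc P →L[ℝ] Euc N) (T : Submodule ℝ (Euc P))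
    (hdual : Lt.comp S = ContinuousLinearMap.id ℝ (Euc N))
    (hinj : ∀ x : Euc N, (∃ v : Euc P, Lt (proj T v) = x) → Φ x = 0 → x = 0) :
    ∃ C > 0, ∃ K > 0, ∀ x, ‖x‖ ≤ C * ‖Φ x‖ + K * ‖proj Tᗮ (S x)‖ := by
  obtain ⟨C, hC, hCV⟩ := exists_norm_le_mul_norm_of_injOn (Φ : Euc N →ₗ[ℝ] Euc M)
    (LinearMap.range (Lt ∘L proj T : Euc P →ₗ[ℝ] Euc N))
    (fun x hx => hinj x (LinearMap.mem_range.mp hx))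
  refine ⟨C, hC, (C * ‖Φ‖ + 1) * ‖Lt‖ + 1, by positivity, fun x => ?_⟩
  have hsplit : x = Lt (proj T (S x)) + Lt (proj Tᗮ (S x)) := by
    rw [← map_add, proj_add_proj_orthogonal]
    exact (congrArg (· x) hdual).symm
  have hmodel : ‖Lt (proj T (S x))‖ ≤ C * ‖Φ (Lt (proj T (S x)))‖ :=
    hCV _ (LinearMap.mem_range.mpr ⟨S x, rfl⟩)
  have herror := Lt.le_opNorm (proj Tᗮ (S x))
  have hΦmodel : ‖Φ (Lt (proj T (S x)))‖ ≤ ‖Φ x‖ + ‖Φ‖ * (‖Lt‖ * ‖proj Tᗮ (S x)‖) := by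
    calc ‖Φ (Lt (proj T (S x)))‖ = ‖Φ x - Φ (Lt (proj Tᗮ (S x)))‖ := by
          congr 1
          rw [eq_sub_iff_add_eq, ← map_add, ← hsplit]
      _ ≤ ‖Φ x‖ + ‖Φ‖ * ‖Lt (proj Tᗮ (S x))‖ :=
          (norm_sub_le _ _).trans (by gcongr; exact Φ.le_opNorm _)
      _ ≤ ‖Φ x‖ + ‖Φ‖ * (‖Lt‖ * ‖proj Tᗮ (S x)‖) := by gcongr
  calc ‖x‖ ≤ ‖Lt (proj T (S x))‖ + ‖Lt (proj Tᗮ (S x))‖ :=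
        (congrArg _ hsplit).trans_le (norm_add_le _ _)
    _ ≤ C * (‖Φ x‖ + ‖Φ‖ * (‖Lt‖ * ‖proj Tᗮ (S x)‖)) + ‖Lt‖ * ‖proj Tᗮ (S x)‖ := by
      gcongr
      exact hmodel.trans (by gcongr)
    _ ≤ C * ‖Φ x‖ + ((C * ‖Φ‖ + 1) * ‖Lt‖ + 1) * ‖proj Tᗮ (S x)‖ := by
      nlinarith [norm_nonneg (proj Tᗮ (S x))]

section Minimizer

variable {N M P : ℕ} {Φ : Euc N →L[ℝ] Euc M} {L : Euc P →L[ℝ] Euc N} {A : Euc P → ℝ}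
  {x₀ xs : Euc N} {w η : Euc M} {α : Euc P} {lam : ℝ}

lemma sq_residual_add_breg_le_of_obj_le (hlam : 0 ≤ lam) (hΦη : adjoint Φ η = L α)
    (hobj : obj Φ L A (Φ x₀ + w) lam xs ≤ obj Φ L A (Φ x₀ + w) lam x₀) :
    (‖w - Φ (xs - x₀)‖ - lam * ‖η‖) ^ 2 + 2 * lam * breg A α (adjoint L xs) (adjoint L x₀) ≤
      (‖w‖ + lam * ‖η‖) ^ 2 := by
  have hres : Φ x₀ + w - Φ xs = w - Φ (xs - x₀) := by rw [map_sub]; abel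
  have hinner : ⟪α, adjoint L xs - adjoint L x₀⟫ = ⟪η, Φ (xs - x₀)⟫ := by
    rw [← map_sub, adjoint_inner_right, ← hΦη, adjoint_inner_left]
  have hcs : -(‖η‖ * (‖w - Φ (xs - x₀)‖ + ‖w‖)) ≤ ⟪η, Φ (xs - x₀)⟫ := by
    have h₁ := abs_real_inner_le_norm η w
    have h₂ := abs_real_inner_le_norm η (w - Φ (xs - x₀))
    rw [inner_sub_right] at h₂
    rw [abs_le] at h₁ h₂
    linarith
  unfold obj at hobj
  unfold breg
  rw [hres, add_sub_cancel_left] at hobj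
  rw [hinner]
  nlinarith [mul_le_mul_of_nonneg_left hcs hlam]

lemma norm_map_sub_le_of_obj_le (hlam : 0 ≤ lam) (hα : α ∈ subdiff A (adjoint L x₀))
    (hΦη : adjoint Φ η = L α)
    (hobj : obj Φ L A (Φ x₀ + w) lam xs ≤ obj Φ L A (Φ x₀ + w) lam x₀) :
    ‖Φ (xs - x₀)‖ ≤ 2 * ‖w‖ + 2 * lam * ‖η‖ := by
  have hsq := le_of_add_le_of_nonneg_left (sq_residual_add_breg_le_of_obj_le hlam hΦη hobj)
    (mul_nonneg (by positivity) (breg_nonneg hα _))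
  have hres := (abs_le_of_sq_le_sq' hsq (by positivity)).2
  linarith [norm_le_norm_add_norm_sub w (Φ (xs - x₀))]

end Minimizer

theorem stmt7_general {N M P : ℕ} (Φ : Euc N →L[ℝ] Euc M) (L : Euc P →L[ℝ] Euc N)
    (Lt : Euc P →L[ℝ] Euc N)
    (A : Euc P → ℝ) (hA : IsNorm A) (x₀ : Euc N)
    (hdual : Lt.comp (ContinuousLinearMap.adjoint L) = ContinuousLinearMap.id ℝ (Euc N))
    (T₀ : Submodule ℝ (Euc P)) (e₀ : Euc P)
    (hdec : Decomposable A (ContinuousLinearMap.adjoint L x₀) T₀ e₀)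
    (hinj : ∀ x : Euc N, (∃ v : Euc P, Lt (proj T₀ v) = x) → Φ x = 0 → x = 0) :
    ∃ C₁ > (0 : ℝ), ∃ C₂ > (0 : ℝ),
      ∀ (ε c : ℝ), 0 < ε → 0 < c → ∀ w : Euc M, ‖w‖ ≤ ε →
      ∀ (η : Euc M) (α : Euc P), SC Φ L A x₀ η α → dualNorm A (proj T₀ᗮ α) < 1 →
      ∀ xs : Euc N,
        (∀ x, obj Φ L A (Φ x₀ + w) (c * ε) xs ≤ obj Φ L A (Φ x₀ + w) (c * ε) x) →
        ‖xs - x₀‖ ≤ (C₁ * (2 + c * ‖η‖) +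
          C₂ * (1 + c * ‖η‖ / 2) ^ 2 / (c * (1 - dualNorm A (proj T₀ᗮ α)))) * ε := by
  obtain ⟨C, hC, K, hK, hstab⟩ :=
    exists_norm_le_mul_norm_map_add_mul_norm_proj Φ (adjoint L) Lt T₀ hdual hinj
  obtain ⟨CA, hCA, hCA_le⟩ := hA.exists_norm_le_mul
  refine ⟨2 * C, by positivity, 2 * (K * CA), by positivity, ?_⟩
  rintro ε c hε hc w hw η α ⟨hα, hΦη, -⟩ hτ xs hmin
  have henergy := sq_residual_add_breg_le_of_obj_le (by positivity) hΦη (hmin x₀)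
  have hresidual := norm_map_sub_le_of_obj_le (by positivity) hα hΦη (hmin x₀)
  have hbreg := hdec.sub_dualNorm_mul_le_breg hA hα (adjoint L xs)
  rw [← map_sub] at hbreg
  set E := ‖η‖
  set D := breg A α (adjoint L xs) (adjoint L x₀)
  have hs : 0 < 1 - dualNorm A (proj T₀ᗮ α) := sub_pos.mpr hτ
  have hΦδ : ‖Φ (xs - x₀)‖ ≤ 2 * (2 + c * E) * ε := by linarith
  have hD : D ≤ 2 * (1 + c * E / 2) ^ 2 / c * ε := by
    have h₁ : 2 * (c * ε) * D ≤ (2 * (1 + c * E / 2) * ε) ^ 2 :=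
      (le_of_add_le_of_nonneg_right henergy (sq_nonneg _)).trans (by gcongr; linarith)
    rw [div_mul_eq_mul_div, le_div_iff₀ hc]
    nlinarith
  have hz : A (proj T₀ᗮ (adjoint L (xs - x₀))) ≤
      2 * (1 + c * E / 2) ^ 2 / (c * (1 - dualNorm A (proj T₀ᗮ α))) * ε := by
    calc _ ≤ D / (1 - dualNorm A (proj T₀ᗮ α)) := by rw [le_div_iff₀ hs]; linarith
      _ ≤ 2 * (1 + c * E / 2) ^ 2 / c * ε / (1 - dualNorm A (proj T₀ᗮ α)) := by gcongr
      _ = _ := by field_simp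
  calc ‖xs - x₀‖ ≤ C * ‖Φ (xs - x₀)‖ + K * ‖proj T₀ᗮ (adjoint L (xs - x₀))‖ := hstab _
    _ ≤ C * (2 * (2 + c * E) * ε) +
        K * (CA * (2 * (1 + c * E / 2) ^ 2 / (c * (1 - dualNorm A (proj T₀ᗮ α))) * ε)) := by
      gcongr
      exact (hCA_le _).trans (by gcongr)
    _ = _ := by ring

theorem stmt7 {N M P : ℕ} (Φ : Euc N →L[ℝ] Euc M) (L : Euc P →L[ℝ] Euc N)
    (Lt : Euc P →L[ℝ] Euc N)
    (A : Euc P → ℝ) (hA : IsNorm A) (x₀ : Euc N)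
    (a : ℝ) (ha : 0 < a)
    (hframe : ∀ x : Euc N, a * ‖x‖ ^ 2 ≤ ‖ContinuousLinearMap.adjoint L x‖ ^ 2)
    (hdual : Lt.comp (ContinuousLinearMap.adjoint L) = ContinuousLinearMap.id ℝ (Euc N))
    (T₀ : Submodule ℝ (Euc P)) (e₀ : Euc P)
    (hdec : Decomposable A (ContinuousLinearMap.adjoint L x₀) T₀ e₀)
    (hinj : ∀ x : Euc N, (∃ v : Euc P, Lt (proj T₀ v) = x) → Φ x = 0 → x = 0) :
    ∃ C₁ > (0 : ℝ), ∃ C₂ > (0 : ℝ),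
      ∀ (ε c : ℝ), 0 < ε → 0 < c → ∀ w : Euc M, ‖w‖ ≤ ε →
      ∀ (η : Euc M) (α : Euc P), SC Φ L A x₀ η α → dualNorm A (proj T₀ᗮ α) < 1 →
      ∀ xs : Euc N,
        (∀ x, obj Φ L A (Φ x₀ + w) (c * ε) xs ≤ obj Φ L A (Φ x₀ + w) (c * ε) x) →
        ‖xs - x₀‖ ≤ (C₁ * (2 + c * ‖η‖) +
          C₂ * (1 + c * ‖η‖ / 2) ^ 2 / (c * (1 - dualNorm A (proj T₀ᗮ α)))) * ε :=
  stmt7_general Φ L Lt A hA x₀ hdual T₀ e₀ hdec hinj
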